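/- If z is drawn from the standard normal distribution N(0,1), then the expectation E_z[g²(u; δ, z)], where g²(u; δ, z) = |z|/(2δ) if |u| < δ|z| and 0 otherwise, equals (1/(δ√(2π)))·exp(−u²/(2δ²)). -/

import Mathlib

open MeasureTheory ProbabilityTheory Real Set Filter
open scoped NNReal Topology

/-!
The integrand is a function of `|z|` and the Gaussian density `φ` is even, so the expectation is
`2 ∫_{|u|/δ}^∞ z/(2δ) φ(z) dz = φ(|u|/δ)/δ`, because `-φ` is an antiderivative of `z φ(z)`.
-/

theorem integral_Ioi_mul_exp_neg_mul_sq {b : ℝ} (hb : 0 < b) (a : ℝ) :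
    ∫ t in Ioi a, t * exp (-b * t ^ 2) = exp (-b * a ^ 2) / (2 * b) := by
  have hderiv (t : ℝ) : HasDerivAt (fun s ↦ -exp (-b * s ^ 2) / (2 * b))
      (t * exp (-b * t ^ 2)) t := by
    refine (((hasDerivAt_pow 2 t).const_mul (-b)).exp.neg.div_const (2 * b)).congr_deriv ?_
    field_simp
    ring
  have hlim : Tendsto (fun s ↦ -exp (-b * s ^ 2) / (2 * b)) atTop (𝓝 0) := by
    have hsq : Tendsto (fun s : ℝ ↦ -b * s ^ 2) atTop atBot :=
      (tendsto_pow_atTop two_ne_zero).const_mul_atTop_of_neg (neg_neg_of_pos hb)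
    simpa using ((tendsto_exp_atBot.comp hsq).neg.div_const (2 * b))
  rw [integral_Ioi_of_hasDerivAt_of_tendsto' (fun t _ ↦ hderiv t)
    (integrable_mul_exp_neg_mul_sq hb).integrableOn hlim]
  ring

theorem integral_Ioi_mul_gaussianPDFReal {v : ℝ≥0} (hv : v ≠ 0) (a : ℝ) :
    ∫ t in Ioi a, t * gaussianPDFReal 0 v t = v * gaussianPDFReal 0 v a := by
  have hb : 0 < (2 * (v : ℝ))⁻¹ := by positivity
  have hpdf (t : ℝ) :
      gaussianPDFReal 0 v t = (√(2 * π * v))⁻¹ * exp (-(2 * (v : ℝ))⁻¹ * t ^ 2) := by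
    rw [gaussianPDFReal, sub_zero]
    congr 2
    ring
  simp_rw [hpdf, mul_left_comm _ (√(2 * π * v))⁻¹]
  rw [integral_const_mul, integral_Ioi_mul_exp_neg_mul_sq hb]
  field_simp

theorem integral_comp_abs_gaussianReal {v : ℝ≥0} (hv : v ≠ 0) (f : ℝ → ℝ) :
    ∫ x, f |x| ∂gaussianReal 0 v = 2 * ∫ x in Ioi 0, gaussianPDFReal 0 v x * f x := by
  have heven : (fun x ↦ gaussianPDFReal 0 v x • f |x|) =
      fun x ↦ gaussianPDFReal 0 v |x| * f |x| := by
    ext x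
    rw [smul_eq_mul, gaussianPDFReal, gaussianPDFReal, sub_zero, sub_zero, sq_abs]
  rw [integral_gaussianReal_eq_integral_smul hv, heven]
  exact integral_comp_abs (f := fun x ↦ gaussianPDFReal 0 v x * f x)

theorem expected_zeroth_order_estimator_gaussian (u δ : ℝ) (hδ : 0 < δ) :
    ∫ z, (if |u| < δ * |z| then |z| / (2 * δ) else 0) ∂(gaussianReal 0 1) =
      (1 / (δ * Real.sqrt (2 * π))) * Real.exp (-u ^ 2 / (2 * δ ^ 2)) := by
  have hintegrand (x : ℝ) : gaussianPDFReal 0 1 x * (if |u| < δ * x then x / (2 * δ) else 0) =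
      (Ioi (|u| / δ)).indicator (fun t ↦ (2 * δ)⁻¹ * (t * gaussianPDFReal 0 1 t)) x := by
    by_cases h : |u| < δ * x
    · rw [if_pos h, indicator_of_mem (by rwa [mem_Ioi, div_lt_iff₀' hδ])]
      ring
    · rw [if_neg h, indicator_of_notMem (by rwa [mem_Ioi, div_lt_iff₀' hδ]), mul_zero]
  rw [integral_comp_abs_gaussianReal one_ne_zero (fun t ↦ if |u| < δ * t then t / (2 * δ) else 0)]
  simp_rw [hintegrand]
  rw [setIntegral_indicator measurableSet_Ioi, Ioi_inter_Ioi, max_eq_right (by positivity),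
    integral_const_mul, integral_Ioi_mul_gaussianPDFReal one_ne_zero, gaussianPDFReal]
  simp only [NNReal.coe_one, mul_one, sub_zero, div_pow, sq_abs]
  field_simp
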